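/- Fix non-negative integers v1', v2' with 0 < v1' + v2' ≤ b. Then the double sum J1 = Σ_{0 ≤ v1 ≤ v1', 0 ≤ v2 ≤ v2'} (−1)^{v1+v2} v^{(v1'+v2'−1)(v1−v2)} [b choose v1][b choose v2][b−v2'−v1 choose v1'−v1][b−v1'−v2 choose v2'−v2] equals (−1)^{v1'+v2'} v^{b(v1'−v2')} [v1'+v2'−1 choose v1'][v1'+v2'−1 choose v2']. -/

import Mathlib

/-!
Once `v ^ ((w₁ + w₂ - 1) * (x - y))` is split into an `x`-part and a `y`-part, the double sum
factors as `J₁ = T(w₁, w₂) · T̄(w₂, w₁)`, where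
`T(n, c) = ∑ₓ (-1)^x v^((n + c - 1) x) [b, x] [b - c - x, n - x]` (`J1Factor b n c`) and `T̄` is
its image under the bar involution `v ↦ v⁻¹`, which fixes every Gaussian binomial.
The q-Pascal rule applied to `[b - c - x, n - x]` gives a recursion in `(n, c)`. For `c = 0`,
`[b, x] [b - x, n - x] = [b, n] [n, x]` reduces `T(n, 0)` to `[b, n]` times the alternating sum
`∑ₓ (-1)^x v^((n - 1) x) [n, x]`, which telescopes to `0` by q-Pascal. Induction then gives
`T(n, c) = (-1)^n v^(b n) [n + c - 1, n]`, and the bar involution only inverts `v^(b n)`.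
-/
noncomputable section

/-- The indeterminate `v`. -/
def v : RatFunc ℚ := RatFunc.X

/-- Quantum integer `[r] = (v^r - v^{-r})/(v - v⁻¹)`. -/
def qint (r : ℤ) : RatFunc ℚ := (v ^ r - v ^ (-r)) / (v - v⁻¹)

/-- Quantum factorial `[n]!`. -/
def qfact (n : ℕ) : RatFunc ℚ := ∏ i ∈ Finset.range n, qint ((i : ℤ) + 1)

/-- Gaussian binomial coefficient `[m choose r]`, zero for `r < 0`. -/
def qbinom (m r : ℤ) : RatFunc ℚ :=
  if r < 0 then 0
  else (∏ i ∈ Finset.range r.toNat, qint (m - (i : ℤ))) / qfact r.toNat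

/-- The double sum `J₁` of the paper (for parameters `b`, `w₁`, `w₂`). -/
def J1 (b : ℤ) (w1 w2 : ℕ) : RatFunc ℚ :=
  ∑ x ∈ Finset.range (w1 + 1), ∑ y ∈ Finset.range (w2 + 1),
    (-1 : RatFunc ℚ) ^ (x + y) * v ^ (((w1 : ℤ) + (w2 : ℤ) - 1) * ((x : ℤ) - (y : ℤ))) *
      qbinom b (x : ℤ) * qbinom b (y : ℤ) *
      qbinom (b - (w2 : ℤ) - (x : ℤ)) ((w1 : ℤ) - (x : ℤ)) *
      qbinom (b - (w1 : ℤ) - (y : ℤ)) ((w2 : ℤ) - (y : ℤ))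

/-- The double sum `J₂`, with `[b choose x][b choose y]` replaced by
`[b choose x−1][b choose y−1]`. -/
def J2 (b : ℤ) (w1 w2 : ℕ) : RatFunc ℚ :=
  ∑ x ∈ Finset.range (w1 + 1), ∑ y ∈ Finset.range (w2 + 1),
    (-1 : RatFunc ℚ) ^ (x + y) * v ^ (((w1 : ℤ) + (w2 : ℤ) - 1) * ((x : ℤ) - (y : ℤ))) *
      qbinom b ((x : ℤ) - 1) * qbinom b ((y : ℤ) - 1) *
      qbinom (b - (w2 : ℤ) - (x : ℤ)) ((w1 : ℤ) - (x : ℤ)) *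
      qbinom (b - (w1 : ℤ) - (y : ℤ)) ((w2 : ℤ) - (y : ℤ))

lemma v_ne_zero : v ≠ 0 := RatFunc.X_ne_zero

lemma v_pow_ne_one {n : ℕ} (hn : n ≠ 0) : v ^ n ≠ 1 := by
  intro h
  have : (Polynomial.X ^ n : Polynomial ℚ) = 1 :=
    RatFunc.algebraMap_injective ℚ (by simpa [v] using h)
  simpa [hn] using congrArg Polynomial.natDegree this

lemma v_zpow_ne_one {k : ℤ} (hk : k ≠ 0) : v ^ k ≠ 1 := by
  obtain ⟨n, rfl | rfl⟩ := k.eq_nat_or_neg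
  · exact_mod_cast v_pow_ne_one (by omega)
  · rw [zpow_neg, inv_ne_one]; exact_mod_cast v_pow_ne_one (by omega)

lemma v_zpow_sub_v_zpow_neg_ne_zero {r : ℤ} (hr : r ≠ 0) : v ^ r - v ^ (-r) ≠ 0 := by
  intro h
  have h2r : v ^ (r + r) - 1 = (v ^ r - v ^ (-r)) * v ^ r := by
    rw [sub_mul, ← zpow_add₀ v_ne_zero, ← zpow_add₀ v_ne_zero, neg_add_cancel, zpow_zero]
  rw [h, zero_mul, sub_eq_zero] at h2r
  exact v_zpow_ne_one (by omega) h2r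

lemma v_sub_v_inv_ne_zero : v - v⁻¹ ≠ 0 := by
  simpa using v_zpow_sub_v_zpow_neg_ne_zero (r := 1) one_ne_zero

lemma qint_ne_zero {r : ℤ} (hr : r ≠ 0) : qint r ≠ 0 :=
  div_ne_zero (v_zpow_sub_v_zpow_neg_ne_zero hr) v_sub_v_inv_ne_zero

lemma qfact_ne_zero (n : ℕ) : qfact n ≠ 0 :=
  Finset.prod_ne_zero_iff.mpr fun _ _ => qint_ne_zero (by omega)

lemma v_zpow_mul_v_zpow {a b c d : ℤ} (h : a + b = c + d) : v ^ a * v ^ b = v ^ c * v ^ d := by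
  rw [← zpow_add₀ v_ne_zero, ← zpow_add₀ v_ne_zero, h]

lemma qint_eq_add (m r : ℤ) : qint m = v ^ r * qint (m - r) + v ^ (r - m) * qint r := by
  simp only [qint, ← mul_div_assoc, ← add_div, mul_sub, ← zpow_add₀ v_ne_zero]
  ring_nf

lemma qbinom_natCast (m : ℤ) (r : ℕ) :
    qbinom m r = (∏ i ∈ Finset.range r, qint (m - i)) / qfact r := by
  rw [qbinom, if_neg (by omega), Int.toNat_natCast]

lemma qbinom_zero (m : ℤ) : qbinom m 0 = 1 := by
  simpa [qfact] using qbinom_natCast m 0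

lemma qbinom_of_neg (m : ℤ) {r : ℤ} (hr : r < 0) : qbinom m r = 0 := if_pos hr

lemma qbinom_natCast_eq_zero {m : ℤ} {r : ℕ} (hm : 0 ≤ m) (hmr : m < r) : qbinom m r = 0 := by
  rw [qbinom_natCast, Finset.prod_eq_zero (i := m.toNat) (Finset.mem_range.mpr (by omega))]
  · exact zero_div _
  · simp [Int.toNat_of_nonneg hm, qint]

lemma qbinom_succ (m : ℤ) (s : ℕ) :
    qbinom m (s + 1) = qint m / qint (s + 1) * qbinom (m - 1) s := by
  have := qint_ne_zero (r := s + 1) (by omega)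
  have := qfact_ne_zero s
  rw [← Nat.cast_succ, qbinom_natCast, qbinom_natCast, Finset.prod_range_succ', qfact,
    Finset.prod_range_succ, ← qfact]
  simp only [Nat.cast_succ, Nat.cast_zero, sub_zero, sub_add_eq_sub_sub_swap]
  field_simp

lemma qbinom_succ' (m : ℤ) (s : ℕ) :
    qbinom m (s + 1) = qint (m - s) / qint (s + 1) * qbinom m s := by
  have := qint_ne_zero (r := s + 1) (by omega)
  have := qfact_ne_zero s
  rw [← Nat.cast_succ, qbinom_natCast, qbinom_natCast, Finset.prod_range_succ, qfact,
    Finset.prod_range_succ, ← qfact]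
  push_cast
  field_simp

lemma qbinom_pascal (m r : ℤ) :
    qbinom m r = v ^ r * qbinom (m - 1) r + v ^ (r - m) * qbinom (m - 1) (r - 1) := by
  rcases lt_trichotomy r 0 with hr | rfl | hr
  · simp [qbinom_of_neg _ hr, qbinom_of_neg _ (show r - 1 < 0 by omega)]
  · simp [qbinom_zero, qbinom_of_neg]
  obtain ⟨s, rfl⟩ : ∃ s : ℕ, r = s + 1 := ⟨(r - 1).toNat, by omega⟩
  have := qint_ne_zero (r := s + 1) (by omega)
  rw [qbinom_succ, qbinom_succ', add_sub_cancel_right, qint_eq_add m (s + 1)]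
  field_simp
  ring_nf

lemma qfact_add (d x : ℕ) :
    qfact (d + x) = qfact d * ∏ i ∈ Finset.range x, qint ((d + x : ℕ) - i) := by
  rw [qfact, Finset.prod_range_add, ← qfact, ← Finset.prod_range_reflect]
  congr 1
  refine Finset.prod_congr rfl fun i hi => ?_
  have := Finset.mem_range.mp hi
  congr 1
  omega

lemma qbinom_mul_qbinom (b : ℤ) (x d : ℕ) :
    qbinom b x * qbinom (b - x) d = qbinom b (x + d : ℕ) * qbinom (x + d : ℕ) x := by
  have hx := qfact_ne_zero x
  have hd := qfact_ne_zero d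
  have hprod : ∏ i ∈ Finset.range x, qint ((d : ℤ) + x - i) ≠ 0 :=
    Finset.prod_ne_zero_iff.mpr fun i hi => qint_ne_zero (by have := Finset.mem_range.mp hi; omega)
  rw [qbinom_natCast, qbinom_natCast, qbinom_natCast, qbinom_natCast, Finset.prod_range_add,
    add_comm x d, qfact_add]
  simp only [Nat.cast_add, sub_sub]
  field_simp

lemma transcendental_v_inv : Transcendental ℚ v⁻¹ := fun h =>
  RatFunc.transcendental_X (K := ℚ) <| by
    convert h.inv
    exacts [Subsingleton.elim _ _, (inv_inv v).symm]

def barHom : RatFunc ℚ →+* RatFunc ℚ :=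
  RatFunc.liftRingHom (Polynomial.aeval v⁻¹).toRingHom
    (nonZeroDivisors_le_comap_nonZeroDivisors_of_injective _
      (transcendental_iff_injective.mp transcendental_v_inv))

lemma barHom_v : barHom v = v⁻¹ := by simp [barHom, v, RatFunc.liftRingHom_X]

lemma barHom_v_zpow (k : ℤ) : barHom (v ^ k) = v ^ (-k) := by
  rw [map_zpow₀, barHom_v, inv_zpow', zpow_neg]

lemma barHom_qint (r : ℤ) : barHom (qint r) = qint r := by
  simp only [qint, map_div₀, map_sub, barHom_v_zpow, map_inv₀, barHom_v, neg_neg, inv_inv]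
  rw [← neg_sub v, ← neg_sub (v ^ r), neg_div_neg_eq]

lemma barHom_qbinom (m r : ℤ) : barHom (qbinom m r) = qbinom m r := by
  unfold qbinom qfact
  split_ifs <;> simp [map_prod, barHom_qint]

lemma qbinom_pascal' (m r : ℤ) :
    qbinom m r = v ^ (-r) * qbinom (m - 1) r + v ^ (m - r) * qbinom (m - 1) (r - 1) := by
  simpa only [barHom_qbinom, map_add, map_mul, barHom_v_zpow, neg_sub] using
    congrArg barHom (qbinom_pascal m r)

lemma sum_range_neg_one_pow_mul_qbinom {n : ℕ} (hn : n ≠ 0) :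
    ∑ x ∈ Finset.range (n + 1), (-1) ^ x * v ^ (((n : ℤ) - 1) * x) * qbinom n x = 0 := by
  set g : ℕ → RatFunc ℚ := fun x => -(-1) ^ x * v ^ ((n : ℤ) * (x - 1)) * qbinom (n - 1) (x - 1)
  have hterm (x : ℕ) : (-1) ^ x * v ^ (((n : ℤ) - 1) * x) * qbinom n x = g (x + 1) - g x := by
    have h₁ := v_zpow_mul_v_zpow (a := ((n : ℤ) - 1) * x) (b := x) (c := n * x) (d := 0) (by ring)
    have h₂ := v_zpow_mul_v_zpow (a := ((n : ℤ) - 1) * x) (b := x - n) (c := n * (x - 1)) (d := 0)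
      (by ring)
    simp only [g, qbinom_pascal (n : ℤ) x, Nat.cast_succ, add_sub_cancel_right, pow_succ,
      zpow_zero, mul_one] at h₁ h₂ ⊢
    linear_combination (-1) ^ x * qbinom (n - 1) x * h₁ + (-1) ^ x * qbinom (n - 1) (x - 1) * h₂
  rw [Finset.sum_congr rfl fun x _ => hterm x, Finset.sum_range_sub]
  simp only [g, Nat.cast_succ, add_sub_cancel_right, Nat.cast_zero, zero_sub,
    qbinom_of_neg _ neg_one_lt_zero,
    qbinom_natCast_eq_zero (r := n) (by omega : (0 : ℤ) ≤ n - 1) (by omega)]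
  ring

def J1Factor (b : ℤ) (n c : ℕ) : RatFunc ℚ :=
  ∑ x ∈ Finset.range (n + 1),
    (-1) ^ x * v ^ (((n : ℤ) + c - 1) * x) * qbinom b x * qbinom (b - c - x) ((n : ℤ) - x)

lemma J1Factor_zero_right {n : ℕ} (hn : n ≠ 0) (b : ℤ) : J1Factor b n 0 = 0 := by
  rw [← mul_zero (qbinom b n), ← sum_range_neg_one_pow_mul_qbinom hn, Finset.mul_sum, J1Factor]
  refine Finset.sum_congr rfl fun x hx => ?_
  obtain ⟨d, rfl⟩ := Nat.exists_eq_add_of_le (Nat.lt_succ_iff.mp (Finset.mem_range.mp hx))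
  have := qbinom_mul_qbinom b x d
  push_cast at this ⊢
  rw [sub_zero, add_sub_cancel_left, add_zero, mul_assoc _ (qbinom b x), this]
  ring

lemma J1Factor_succ (b : ℤ) (n c : ℕ) :
    J1Factor b (n + 1) c = v ^ (-((n : ℤ) + 1)) * J1Factor b (n + 1) (c + 1)
      + v ^ (b - c - (n + 1)) * J1Factor b n (c + 1) := by
  have hext : J1Factor b n (c + 1) = ∑ x ∈ Finset.range (n + 2),
      (-1) ^ x * v ^ (((n : ℤ) + (c + 1 : ℕ) - 1) * x) * qbinom b x
        * qbinom (b - (c + 1 : ℕ) - x) ((n : ℤ) - x) := by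
    rw [Finset.sum_range_succ, qbinom_of_neg _ (show (n : ℤ) - (n + 1 : ℕ) < 0 by omega),
      mul_zero, add_zero, J1Factor]
  rw [hext, J1Factor, J1Factor, Finset.mul_sum, Finset.mul_sum, ← Finset.sum_add_distrib]
  refine Finset.sum_congr rfl fun x _ => ?_
  have hv := v_zpow_mul_v_zpow (a := ((n : ℤ) + c) * x) (b := x - (n + 1))
    (c := -(n + 1)) (d := ((n : ℤ) + c + 1) * x) (by ring)
  push_cast
  rw [qbinom_pascal' (b - c - x)]
  ring_nf at hv ⊢
  rw [hv]
  ring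

lemma J1Factor_eq (b : ℤ) (n c : ℕ) :
    J1Factor b n c = (-1) ^ n * v ^ (b * n) * qbinom ((n : ℤ) + c - 1) n := by
  induction n generalizing c with
  | zero => simp [J1Factor, qbinom_zero]
  | succ n ihn =>
    induction c with
    | zero =>
      rw [J1Factor_zero_right n.succ_ne_zero, qbinom_natCast_eq_zero (by omega) (by omega),
        mul_zero]
    | succ c ihc =>
      have hrec := J1Factor_succ b n c
      rw [ihc, ihn] at hrec
      push_cast at hrec ⊢
      rw [show (n : ℤ) + 1 + c - 1 = n + c by ring, show (n : ℤ) + (c + 1) - 1 = n + c by ring]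
        at hrec
      rw [show (n : ℤ) + 1 + (c + 1) - 1 = n + c + 1 by ring, qbinom_pascal,
        add_sub_cancel_right, add_sub_cancel_right]
      have hv₁ : v ^ ((n : ℤ) + 1) * v ^ (-((n : ℤ) + 1)) = 1 := by
        rw [← zpow_add₀ v_ne_zero, add_neg_cancel, zpow_zero]
      have hv₂ : v ^ ((n : ℤ) + 1) * v ^ (b - c - (n + 1)) * v ^ (b * n)
          = v ^ (b * (n + 1)) * v ^ ((n : ℤ) + 1 - (n + c + 1)) := by
        simp only [← zpow_add₀ v_ne_zero]; ring_nf
      linear_combination (-v ^ ((n : ℤ) + 1)) * hrec - J1Factor b (n + 1) (c + 1) * hv₁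
        - (-1) ^ n * qbinom (n + c) n * hv₂

lemma J1_eq_J1Factor_mul_barHom (b : ℤ) (w1 w2 : ℕ) :
    J1 b w1 w2 = J1Factor b w1 w2 * barHom (J1Factor b w2 w1) := by
  simp only [J1, J1Factor, map_sum, map_mul, map_pow, map_neg, map_one, barHom_v_zpow,
    barHom_qbinom, Finset.sum_mul_sum]
  refine Finset.sum_congr rfl fun x _ => Finset.sum_congr rfl fun y _ => ?_
  have hv : v ^ (((w1 : ℤ) + w2 - 1) * (x - y))
      = v ^ (((w1 : ℤ) + w2 - 1) * x) * v ^ (-(((w2 : ℤ) + w1 - 1) * y)) := by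
    rw [← zpow_add₀ v_ne_zero]; ring_nf
  rw [hv, pow_add]
  ring

theorem J1_eval_general (b : ℤ) (w1 w2 : ℕ) :
    J1 b w1 w2
      = (-1 : RatFunc ℚ) ^ (w1 + w2) * v ^ (b * ((w1 : ℤ) - (w2 : ℤ))) *
          qbinom ((w1 : ℤ) + (w2 : ℤ) - 1) (w1 : ℤ) *
          qbinom ((w1 : ℤ) + (w2 : ℤ) - 1) (w2 : ℤ) := by
  have hv : v ^ (b * w1) * v ^ (-(b * w2)) = v ^ (b * ((w1 : ℤ) - w2)) := by
    rw [← zpow_add₀ v_ne_zero]; ring_nf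
  rw [J1_eq_J1Factor_mul_barHom, J1Factor_eq, J1Factor_eq, add_comm (w2 : ℤ)]
  simp only [map_mul, map_pow, map_neg, map_one, barHom_v_zpow, barHom_qbinom]
  rw [← hv, pow_add]
  ring

/-- for 0 < w1 + w2 <= b (with b >= 1),
J1 = (-1)^(w1+w2) v^(b(w1-w2)) [w1+w2-1 choose w1][w1+w2-1 choose w2]. -/
theorem J1_eval (b : ℤ) (hb : 1 ≤ b) (w1 w2 : ℕ) (hpos : 0 < w1 + w2)
    (hle : (w1 : ℤ) + (w2 : ℤ) ≤ b) :
    J1 b w1 w2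
      = (-1 : RatFunc ℚ) ^ (w1 + w2) * v ^ (b * ((w1 : ℤ) - (w2 : ℤ))) *
          qbinom ((w1 : ℤ) + (w2 : ℤ) - 1) (w1 : ℤ) *
          qbinom ((w1 : ℤ) + (w2 : ℤ) - 1) (w2 : ℤ) :=
  J1_eval_general b w1 w2
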